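/- Let μ₀ > 0 and b₀ be real and let τ ∈ ℂ with τ ≠ 0. For complex F and W define Φ₁⁺ = F, Φ₁⁻ = conj(F), Φ₂⁺ = i·conj(τ)·W/μ₀, Φ₂⁻ = −i·τ·conj(W)/μ₀. Then the pair of conditions Im W = 0 and Im F = b₀ − Im(conj(τ)·W/μ₀) holds if and only if the pair of conditions Φ₁⁺ = Φ₁⁻ + i(1 − conj(τ)/τ)·Φ₂⁻ + 2i·b₀ and Φ₂⁺ = −(conj(τ)/τ)·Φ₂⁻ holds. -/

import Mathlib

/-!
Since `τ ≠ 0` and `μ₀ ≠ 0`, the second relation reads `i τ̄ W / μ₀ = i τ̄ W̄ / μ₀`, i.e. `W` is real.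
For real `W` the jump term `i (1 - τ̄/τ)(-i τ W̄ / μ₀)` collapses to `(τ - τ̄) W / μ₀ = 2i Im τ · W / μ₀`,
so the first relation says `F - F̄ = 2i Im F` equals `2i (b₀ - Im(τ̄ W / μ₀))`.
-/

open Complex ComplexConjugate

theorem neg_conj_div_mul_neg_I_mul {τ : ℂ} (hτ : τ ≠ 0) (z c : ℂ) :
    -(conj τ / τ) * (-I * τ * z / c) = I * conj τ * z / c := by
  field_simp

theorem I_mul_one_sub_conj_div_mul {τ : ℂ} (hτ : τ ≠ 0) (z c : ℂ) :
    I * (1 - conj τ / τ) * (-I * τ * z / c) = (τ - conj τ) * z / c := by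
  field_simp
  linear_combination (conj τ - τ) * z / c * I_sq

theorem eq_conj_add_two_mul_I_mul_iff {F : ℂ} {r : ℝ} : F = conj F + 2 * I * r ↔ F.im = r := by
  rw [← sub_eq_iff_eq_add', sub_conj, Complex.ext_iff]
  simp

theorem I_mul_conj_mul_div_eq_iff_im_eq_zero {τ c : ℂ} (hτ : τ ≠ 0) (hc : c ≠ 0) (W : ℂ) :
    I * conj τ * W / c = -(conj τ / τ) * (-I * τ * conj W / c) ↔ W.im = 0 := by
  have hIτ : I * conj τ ≠ 0 := mul_ne_zero I_ne_zero (by simpa using hτ)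
  rw [neg_conj_div_mul_neg_I_mul hτ, div_left_inj' hc, mul_right_inj' hIτ, eq_comm,
    conj_eq_iff_im]

theorem eq_conj_add_iff_im_eq_of_real {τ : ℂ} (hτ : τ ≠ 0) (F : ℂ) (w μ b : ℝ) :
    F = conj F + I * (1 - conj τ / τ) * (-I * τ * conj (w : ℂ) / μ) + 2 * I * b ↔
      F.im = b - (conj τ * w / μ).im := by
  have hsum : (τ - conj τ) * w / μ + 2 * I * b = 2 * I * ↑(b - (conj τ * w / μ).im) := by
    rw [sub_conj, div_ofReal_im, im_mul_ofReal, conj_im]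
    push_cast
    ring
  rw [conj_ofReal, I_mul_one_sub_conj_div_mul hτ, add_assoc, hsum, eq_conj_add_two_mul_I_mul_iff]

theorem stmt15 (μ₀ b₀ : ℝ) (hμ : 0 < μ₀) (τ F W : ℂ) (hτ : τ ≠ 0) :
    (W.im = 0 ∧ F.im = b₀ - (conj τ * W / (μ₀ : ℂ)).im) ↔
    (F = conj F + I * (1 - conj τ / τ) * (-(I) * τ * conj W / (μ₀ : ℂ)) + 2 * I * (b₀ : ℂ) ∧
      I * conj τ * W / (μ₀ : ℂ) = -(conj τ / τ) * (-(I) * τ * conj W / (μ₀ : ℂ))) := by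
  rw [I_mul_conj_mul_div_eq_iff_im_eq_zero hτ (ofReal_ne_zero.2 hμ.ne'),
    and_comm (b := W.im = 0)]
  refine and_congr_right fun hW => ?_
  obtain ⟨w, rfl⟩ : ∃ w : ℝ, W = w := ⟨W.re, Complex.ext rfl hW⟩
  exact (eq_conj_add_iff_im_eq_of_real hτ F w μ₀ b₀).symm
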